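/- (Albert's theorem for operators on linear spaces.) A Hermitian block operator 𝐀 = [[A, B], [B~, D]] on X × Y is non-negative if and only if 𝐀 is of positive type (i.e., (A, B) is a positive pair) and the generalized Schur complement σ(𝐀) = D − ω(A, B) is non-negative. -/

import Mathlib

open scoped ComplexOrder ComplexConjugate
open Complex

noncomputable section

/-- For a linear map `R : V → H` into a Hilbert space, `adjMap R : H → V'` is the
operator `R*`, sending `h` to the antilinear functional `v ↦ (h | R v)`
(in Mathlib's convention, `v ↦ ⟪R v, h⟫`). -/
def adjMap {V H : Type*} [AddCommGroup V] [Module ℂ V]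
    [NormedAddCommGroup H] [InnerProductSpace ℂ H] (R : V →ₗ[ℂ] H) :
    H →ₗ[ℂ] (V →ₗ⋆[ℂ] ℂ) where
  toFun h :=
    { toFun := fun v => @inner ℂ _ _ (R v) h
      map_add' := fun v w => by simp [inner_add_left]
      map_smul' := fun c v => by simp [inner_smul_left]; ring }
  map_add' h₁ h₂ := by ext v; simp [inner_add_right]
  map_smul' c h := by ext v; simp [inner_smul_right]

/-- For `B : Y → X'`, the operator `B~ := B'↾X : X → Y'`, `(B~ x) y = conj (⟨B y, x⟩)`. -/
def Btilde {X Y : Type*} [AddCommGroup X] [Module ℂ X] [AddCommGroup Y] [Module ℂ Y]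
    (B : Y →ₗ[ℂ] (X →ₗ⋆[ℂ] ℂ)) : X →ₗ[ℂ] (Y →ₗ⋆[ℂ] ℂ) where
  toFun x :=
    { toFun := fun y => conj (B y x)
      map_add' := fun y₁ y₂ => by simp
      map_smul' := fun c y => by simp }
  map_add' x₁ x₂ := by ext y; simp
  map_smul' c x := by ext y; simp

/-! If the block form is non-negative, then for fixed `y` it reads
`‖R x‖² + 2 Re (B y x) + D y y` as a function of `x`; rescaling `x` along complex rays and a
discriminant argument give `‖B y x‖ ≤ √(D y y) ‖R x‖`. So `B y` factors through a bounded
functional on `ran R`, which Hahn–Banach and Riesz represent by a vector `T y` in the closure of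
`ran R` of norm at most `√(D y y)`: this is `R* (T y) = B y` together with `σ(𝐀) ≥ 0`. Such a
representer is unique because `R*` is injective on the closure of `ran R`, which makes `T`
linear. Conversely, `R* T = B` completes the square: the form equals
`‖R x + T y‖² + (D y - T* T y) y`. -/

theorem adjMap_apply {V H : Type*} [AddCommGroup V] [Module ℂ V]
    [NormedAddCommGroup H] [InnerProductSpace ℂ H] (R : V →ₗ[ℂ] H) (h : H) (v : V) :
    adjMap R h v = inner ℂ (R v) h :=
  rfl

theorem Btilde_apply {X Y : Type*} [AddCommGroup X] [Module ℂ X] [AddCommGroup Y] [Module ℂ Y]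
    (B : Y →ₗ[ℂ] (X →ₗ⋆[ℂ] ℂ)) (x : X) (y : Y) : Btilde B x y = conj (B y x) :=
  rfl

theorem norm_sq_le_mul_of_forall_nonneg {a d : ℝ} {b : ℂ} (ha : 0 ≤ a)
    (h : ∀ c : ℂ, 0 ≤ ‖c‖ ^ 2 * a + 2 * (conj c * b).re + d) : ‖b‖ ^ 2 ≤ a * d := by
  rcases eq_or_ne b 0 with rfl | hb
  · simpa using mul_nonneg ha (by simpa using h 0)
  have hb' : (‖b‖ : ℂ) ≠ 0 := by exact_mod_cast norm_ne_zero_iff.mpr hb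
  -- along the ray `c = -s b / ‖b‖` the hypothesis is a real quadratic inequality in `s`
  have hquad : ∀ s : ℝ, 0 ≤ a * (s * s) + (-2 * ‖b‖) * s + d := fun s => by
    have hc := h (-s * b / ‖b‖)
    have hnorm : ‖(-s * b / ‖b‖ : ℂ)‖ = |s| := by
      rw [norm_div, norm_mul, norm_neg, Complex.norm_real, Complex.norm_real, norm_norm,
        mul_div_assoc, div_self (norm_ne_zero_iff.mpr hb), mul_one, Real.norm_eq_abs]
    have hre : (conj (-s * b / ‖b‖) * b).re = -s * ‖b‖ := by
      rw [map_div₀, map_mul, map_neg, Complex.conj_ofReal, Complex.conj_ofReal,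
        div_mul_eq_mul_div, mul_assoc, Complex.conj_mul', sq, ← mul_assoc, mul_div_assoc,
        div_self hb']
      simp
    rw [hnorm, hre, sq_abs] at hc
    linarith
  have := discrim_le_zero hquad
  rw [discrim] at this
  nlinarith

theorem exists_comp_rangeRestrict_eq {R M N P : Type*} [Ring R] [AddCommGroup M] [Module R M]
    [AddCommGroup N] [Module R N] [AddCommGroup P] [Module R P] (f : M →ₗ[R] N) (g : M →ₗ[R] P)
    (h : LinearMap.ker f ≤ LinearMap.ker g) :
    ∃ ψ : LinearMap.range f →ₗ[R] P, ∀ x, ψ (f.rangeRestrict x) = g x := by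
  refine ⟨(LinearMap.ker f).liftQ g h ∘ₗ f.quotKerEquivRange.symm.toLinearMap, fun x => ?_⟩
  change (LinearMap.ker f).liftQ g h (f.quotKerEquivRange.symm ⟨f x, _⟩) = g x
  rw [LinearMap.quotKerEquivRange_symm_apply_image, Submodule.mkQ_apply, Submodule.liftQ_apply]

section

variable {X H : Type*} [AddCommGroup X] [Module ℂ X] [NormedAddCommGroup H] [InnerProductSpace ℂ H]

theorem adjMap_apply_self (R : X →ₗ[ℂ] H) (x : X) : adjMap R (R x) x = ((‖R x‖ ^ 2 : ℝ) : ℂ) := by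
  rw [adjMap_apply, inner_self_eq_norm_sq_to_K]
  norm_cast

theorem norm_le_sqrt_mul_of_forall_nonneg (R : X →ₗ[ℂ] H) (φ : X →ₗ⋆[ℂ] ℂ) {d : ℝ}
    (h : ∀ x, 0 ≤ ‖R x‖ ^ 2 + 2 * (φ x).re + d) (x : X) : ‖φ x‖ ≤ √d * ‖R x‖ := by
  have hsq : ‖φ x‖ ^ 2 ≤ ‖R x‖ ^ 2 * d :=
    norm_sq_le_mul_of_forall_nonneg (sq_nonneg _) fun c => by
      simpa [norm_smul, mul_pow] using h (c • x)
  have hd : 0 ≤ d := by simpa using h 0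
  rw [← Real.sqrt_sq (norm_nonneg (φ x)), mul_comm, ← Real.sqrt_sq (norm_nonneg (R x)),
    ← Real.sqrt_mul (sq_nonneg _)]
  exact Real.sqrt_le_sqrt hsq

theorem adjMap_injOn_closure_range (R : X →ₗ[ℂ] H) :
    Set.InjOn (adjMap R) (closure (Set.range R)) := by
  intro t₁ ht₁ t₂ ht₂ heq
  set K := LinearMap.range R
  have hclosure : closure (Set.range R) = K.topologicalClosure := by
    rw [Submodule.topologicalClosure_coe, LinearMap.coe_range]
  have horth : t₁ - t₂ ∈ K.topologicalClosureᗮ := by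
    rw [Submodule.orthogonal_closure, Submodule.mem_orthogonal]
    rintro _ ⟨x, rfl⟩
    rw [inner_sub_right, ← adjMap_apply, ← adjMap_apply, heq, sub_self]
  rw [hclosure] at ht₁ ht₂
  exact sub_eq_zero.mp <| Submodule.disjoint_def.mp K.topologicalClosure.orthogonal_disjoint _
    (K.topologicalClosure.sub_mem ht₁ ht₂) horth

theorem exists_mem_closure_range_adjMap_eq [CompleteSpace H] (R : X →ₗ[ℂ] H)
    (φ : X →ₗ⋆[ℂ] ℂ) {C : ℝ} (hC : 0 ≤ C) (hφ : ∀ x, ‖φ x‖ ≤ C * ‖R x‖) :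
    ∃ t ∈ closure (Set.range R), adjMap R t = φ ∧ ‖t‖ ≤ C := by
  set K := (LinearMap.range R).topologicalClosure
  have : CompleteSpace K := (Submodule.isClosed_topologicalClosure _).completeSpace_coe
  obtain ⟨ψ, hψ⟩ := exists_comp_rangeRestrict_eq R
    ((starLinearEquiv ℂ : ℂ ≃ₗ⋆[ℂ] ℂ).toLinearMap ∘ₛₗ φ) fun x hx => by
      have := hφ x
      rw [LinearMap.mem_ker.mp hx, norm_zero, mul_zero, norm_le_zero_iff] at this
      simp [this]
  have hψC : ∀ u, ‖ψ u‖ ≤ C * ‖u‖ := by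
    rintro ⟨_, x, rfl⟩
    have := hψ x
    simp only [LinearMap.coe_comp, Function.comp_apply] at this
    exact (congrArg norm this).trans_le (by simpa using hφ x)
  obtain ⟨g, hg, hgψ⟩ := exists_extension_norm_eq (LinearMap.range R) (ψ.mkContinuous C hψC)
  set s := (InnerProductSpace.toDual ℂ K).symm (g ∘L K.subtypeL)
  refine ⟨s, ?_, ?_, ?_⟩
  · rw [← LinearMap.coe_range, ← Submodule.topologicalClosure_coe]
    exact s.2
  · ext x
    have hRx : R x ∈ K := (LinearMap.range R).le_topologicalClosure (LinearMap.mem_range_self R x)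
    have hsx : inner ℂ (s : H) (R x) = conj (φ x) := by
      rw [show R x = ((⟨R x, hRx⟩ : K) : H) from rfl, ← Submodule.coe_inner,
        InnerProductSpace.toDual_symm_apply]
      simpa using (hg (R.rangeRestrict x)).trans (hψ x)
    rw [adjMap_apply, ← inner_conj_symm, hsx, Complex.conj_conj]
  · calc ‖(s : H)‖ = ‖g ∘L K.subtypeL‖ := (InnerProductSpace.toDual ℂ K).symm.norm_map _
      _ ≤ ‖g‖ * ‖K.subtypeL‖ := g.opNorm_comp_le _
      _ ≤ ‖g‖ := mul_le_of_le_one_right (norm_nonneg g) K.norm_subtypeL_le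
      _ ≤ C := hgψ ▸ LinearMap.mkContinuous_norm_le _ hC _

theorem exists_linearMap_adjMap_comp_eq {Y : Type*} [AddCommGroup Y] [Module ℂ Y]
    (R : X →ₗ[ℂ] H) (B : Y →ₗ[ℂ] (X →ₗ⋆[ℂ] ℂ))
    (hB : ∀ y, ∃ t ∈ closure (Set.range R), adjMap R t = B y) :
    ∃ T : Y →ₗ[ℂ] H, ∀ y, T y ∈ closure (Set.range R) ∧ adjMap R (T y) = B y := by
  set K := (LinearMap.range R).topologicalClosure
  have hK : ∀ t, t ∈ K ↔ t ∈ closure (Set.range R) := fun t => by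
    rw [← SetLike.mem_coe, Submodule.topologicalClosure_coe, LinearMap.coe_range]
  have hinj : Function.Injective (adjMap R ∘ₗ K.subtype) := fun t₁ t₂ h =>
    Subtype.ext <| adjMap_injOn_closure_range R ((hK _).mp t₁.2) ((hK _).mp t₂.2) h
  set e := LinearEquiv.ofInjective _ hinj
  have hBK : ∀ y, B y ∈ LinearMap.range (adjMap R ∘ₗ K.subtype) := fun y => by
    obtain ⟨t, ht, htB⟩ := hB y
    exact ⟨⟨t, (hK t).mpr ht⟩, htB⟩
  refine ⟨K.subtype ∘ₗ e.symm.toLinearMap ∘ₗ B.codRestrict _ hBK, fun y => ⟨?_, ?_⟩⟩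
  · exact (hK _).mp (e.symm _).2
  · have := congrArg Subtype.val (e.apply_symm_apply (B.codRestrict _ hBK y))
    rwa [LinearEquiv.ofInjective_apply] at this

end

section BlockForm

variable {X Y H : Type*} [AddCommGroup X] [Module ℂ X] [AddCommGroup Y] [Module ℂ Y]
  [NormedAddCommGroup H] [InnerProductSpace ℂ H]
  {A : X →ₗ[ℂ] (X →ₗ⋆[ℂ] ℂ)} (B : Y →ₗ[ℂ] (X →ₗ⋆[ℂ] ℂ)) (D : Y →ₗ[ℂ] (Y →ₗ⋆[ℂ] ℂ))
  {R : X →ₗ[ℂ] H}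

theorem blockForm_eq (hR : ∀ x, A x = adjMap R (R x)) (x : X) (y : Y) :
    (A x + B y) x + (Btilde B x + D y) y = ((‖R x‖ ^ 2 + 2 * (B y x).re : ℝ) : ℂ) + D y y := by
  have h := Complex.add_conj (B y x)
  rw [LinearMap.add_apply, LinearMap.add_apply, hR, adjMap_apply_self, Btilde_apply]
  push_cast at h ⊢
  linear_combination h

theorem blockForm_eq_norm_sq_add_schur (hR : ∀ x, A x = adjMap R (R x)) {T : Y →ₗ[ℂ] H}
    (hT : ∀ y, adjMap R (T y) = B y) (x : X) (y : Y) :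
    (A x + B y) x + (Btilde B x + D y) y =
      ((‖R x + T y‖ ^ 2 : ℝ) : ℂ) + (D y - adjMap T (T y)) y := by
  rw [blockForm_eq B D hR, LinearMap.sub_apply, adjMap_apply_self, norm_add_sq (𝕜 := ℂ), ← hT,
    adjMap_apply, RCLike.re_to_complex]
  push_cast
  ring

theorem blockForm_nonneg_iff (hR : ∀ x, A x = adjMap R (R x)) (x : X) (y : Y) :
    0 ≤ (A x + B y) x + (Btilde B x + D y) y ↔
      0 ≤ ‖R x‖ ^ 2 + 2 * (B y x).re + (D y y).re ∧ (D y y).im = 0 := by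
  rw [blockForm_eq B D hR, Complex.le_def]
  simp only [Complex.add_re, Complex.add_im, Complex.ofReal_re, Complex.ofReal_im,
    Complex.zero_re, Complex.zero_im, zero_add, eq_comm]

end BlockForm

theorem schur_stmt15_general {X Y H : Type} [AddCommGroup X] [Module ℂ X]
    [AddCommGroup Y] [Module ℂ Y]
    [NormedAddCommGroup H] [InnerProductSpace ℂ H] [CompleteSpace H]
    (A : X →ₗ[ℂ] (X →ₗ⋆[ℂ] ℂ)) (B : Y →ₗ[ℂ] (X →ₗ⋆[ℂ] ℂ))
    (D : Y →ₗ[ℂ] (Y →ₗ⋆[ℂ] ℂ))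
    (R : X →ₗ[ℂ] H) (hR : ∀ x, A x = adjMap R (R x)) :
    (∀ (x : X) (y : Y), 0 ≤ (A x + B y) x + ((Btilde B) x + D y) y) ↔
      ∃ T : Y →ₗ[ℂ] H, (∀ y, adjMap R (T y) = B y) ∧
        (∀ y, T y ∈ closure (Set.range R)) ∧
        ∀ y, 0 ≤ (D y - adjMap T (T y)) y := by
  constructor
  · intro hpos
    have hform x y := (blockForm_nonneg_iff B D hR x y).mp (hpos x y)
    have hrep : ∀ y, ∃ t ∈ closure (Set.range R), adjMap R t = B y ∧ ‖t‖ ≤ √(D y y).re :=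
      fun y => exists_mem_closure_range_adjMap_eq R (B y) (Real.sqrt_nonneg _)
        (norm_le_sqrt_mul_of_forall_nonneg R (B y) fun x => (hform x y).1)
    obtain ⟨T, hT⟩ := exists_linearMap_adjMap_comp_eq R B fun y =>
      (hrep y).imp fun _ ⟨ht, htB, _⟩ => ⟨ht, htB⟩
    refine ⟨T, fun y => (hT y).2, fun y => (hT y).1, fun y => ?_⟩
    obtain ⟨t, ht, htB, htD⟩ := hrep y
    obtain rfl : T y = t := adjMap_injOn_closure_range R (hT y).1 ht ((hT y).2.trans htB.symm)
    have hd : 0 ≤ (D y y).re := by simpa using (hform 0 y).1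
    have hD : D y y = ((D y y).re : ℂ) := Complex.ext rfl (by simp [(hform 0 y).2])
    rw [LinearMap.sub_apply, adjMap_apply_self, hD, ← Complex.ofReal_sub, Complex.zero_le_real,
      sub_nonneg]
    exact (Real.le_sqrt (norm_nonneg _) hd).mp htD
  · rintro ⟨T, hT, -, hS⟩ x y
    rw [blockForm_eq_norm_sq_add_schur B D hR hT]
    exact add_nonneg (Complex.zero_le_real.mpr (sq_nonneg _)) (hS y)

theorem schur_stmt15 {X Y H : Type} [AddCommGroup X] [Module ℂ X]
    [AddCommGroup Y] [Module ℂ Y]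
    [NormedAddCommGroup H] [InnerProductSpace ℂ H] [CompleteSpace H]
    (A : X →ₗ[ℂ] (X →ₗ⋆[ℂ] ℂ)) (B : Y →ₗ[ℂ] (X →ₗ⋆[ℂ] ℂ))
    (D : Y →ₗ[ℂ] (Y →ₗ⋆[ℂ] ℂ))
    (hDh : ∀ y₁ y₂, D y₁ y₂ = conj (D y₂ y₁))
    (R : X →ₗ[ℂ] H) (hR : ∀ x, A x = adjMap R (R x)) :
    (∀ (x : X) (y : Y), 0 ≤ (A x + B y) x + ((Btilde B) x + D y) y) ↔
      ∃ T : Y →ₗ[ℂ] H, (∀ y, adjMap R (T y) = B y) ∧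
        (∀ y, T y ∈ closure (Set.range R)) ∧
        ∀ y, 0 ≤ (D y - adjMap T (T y)) y :=
  schur_stmt15_general A B D R hR
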